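/- Let P and Q be nonzero integers with D = P^2 - 4Q ≠ 0, let U = U(P,Q) be nondegenerate, and let p be a prime dividing both P and Q. Let n ≥ 1 satisfy gcd(p,n) = 1 and exclude the case where simultaneously p = 2, n = 1, and 2·v_2(P) > v_2(Q). Then for every k ≥ 1 there exists an integer t such that U_{p^k n} = p^{p^{k-1}}·t·U_{p^{k-1} n}. -/

import Mathlib

/-!
With `M = !![P, -Q; 1, 0]` one has `U n = (M ^ n) 1 0`, and by Cayley–Hamilton `M ^ m` is a root
of `X ^ 2 - V m * X + Q ^ m`, where `V m = tr (M ^ m)`. Hence `U (m * j) = U m * U' j` with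
`U' = U (V m) (Q ^ m)`. If `p ^ s` divides `P ^ 2` and `Q`, the recurrence (with `P` of weight
`s / 2` and `Q` of weight `s`) gives `p ^ (s * m) ∣ V m ^ 2`, and then
`p ^ (s * m * (p - 1)) ∣ U' p ^ 2`. For `m = p ^ (k - 1) * n` this is at least
`p ^ (2 * p ^ (k - 1))` as soon as `s * (p - 1) * n ≥ 2`: take `s = 1`, except for `p = 2`,
`n = 1`, where the valuation hypothesis gives `4 ∣ Q` and `s = 2` works.
-/

/-- Lucas sequence of the first kind: `U 0 = 0`, `U 1 = 1`,
`U (n+2) = P * U (n+1) - Q * U n`. -/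
def lucasU (P Q : ℤ) : ℕ → ℤ
  | 0 => 0
  | 1 => 1
  | n + 2 => P * lucasU P Q (n + 1) - Q * lucasU P Q n

open Matrix

theorem dvd_sq_sub_of_dvd_sq {d x y : ℤ} (hx : d ∣ x ^ 2) (hy : d ∣ y ^ 2) :
    d ∣ (x - y) ^ 2 := by
  have hxy : d ∣ x * y := by
    rw [← Int.pow_dvd_pow_iff two_ne_zero, mul_pow, sq d]
    exact mul_dvd_mul hx hy
  rw [show (x - y) ^ 2 = x ^ 2 - 2 * (x * y) + y ^ 2 by ring]
  exact (hx.sub (hxy.mul_left 2)).add hy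

theorem pow_dvd_sq_of_recurrence {A B d : ℤ} {w : ℕ → ℤ}
    (hrec : ∀ n, w (n + 2) = A * w (n + 1) - B * w n)
    (hA : d ∣ A ^ 2) (hB : d ∣ B) (hw : d ∣ w 1 ^ 2) : ∀ n, d ^ n ∣ w n ^ 2
  | 0 => by simp
  | 1 => by simpa using hw
  | n + 2 => by
    rw [hrec]
    apply dvd_sq_sub_of_dvd_sq
    · rw [mul_pow, pow_succ']
      exact mul_dvd_mul hA (pow_dvd_sq_of_recurrence hrec hA hB hw (n + 1))
    · rw [mul_pow, pow_add, mul_comm]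
      exact mul_dvd_mul (pow_dvd_pow_of_dvd hB 2) (pow_dvd_sq_of_recurrence hrec hA hB hw n)

theorem lucasU_add_two (P Q : ℤ) (n : ℕ) :
    lucasU P Q (n + 2) = P * lucasU P Q (n + 1) - Q * lucasU P Q n := rfl

theorem pow_succ_eq_lucasU {R : Type*} [Ring R] {x : R} {A B : ℤ}
    (hx : x ^ 2 = A • x - B • 1) :
    ∀ n, x ^ (n + 1) = lucasU A B (n + 1) • x - (B * lucasU A B n) • 1
  | 0 => by simp [lucasU]
  | n + 1 => by
    rw [pow_succ, pow_succ_eq_lucasU hx n, sub_mul, smul_mul_assoc, smul_mul_assoc, one_mul,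
      ← sq, hx, lucasU_add_two]
    module

theorem Matrix.sq_eq_trace_smul_sub_det_smul {R : Type*} [CommRing R]
    (N : Matrix (Fin 2) (Fin 2) R) : N ^ 2 = N.trace • N - N.det • 1 := by
  ext i j
  fin_cases i <;> fin_cases j <;> simp [sq, mul_apply, trace_fin_two, det_fin_two] <;> ring

def lucasMatrix (P Q : ℤ) : Matrix (Fin 2) (Fin 2) ℤ := !![P, -Q; 1, 0]

theorem lucasMatrix_sq (P Q : ℤ) : lucasMatrix P Q ^ 2 = P • lucasMatrix P Q - Q • 1 := by
  simpa [lucasMatrix, trace_fin_two] using (lucasMatrix P Q).sq_eq_trace_smul_sub_det_smul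

theorem lucasMatrix_pow_apply_one_zero (P Q : ℤ) (n : ℕ) :
    (lucasMatrix P Q ^ n) 1 0 = lucasU P Q n := by
  cases n with
  | zero => simp [lucasU]
  | succ n =>
    rw [pow_succ_eq_lucasU (lucasMatrix_sq P Q), Matrix.sub_apply, Matrix.smul_apply,
      Matrix.smul_apply, one_apply_ne one_ne_zero]
    simp [lucasMatrix]

/-- The Lucas sequence of the second kind, `V m = α ^ m + β ^ m` for the roots `α, β` of
`X ^ 2 - P * X + Q`. -/
def lucasV (P Q : ℤ) (m : ℕ) : ℤ := (lucasMatrix P Q ^ m).trace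

theorem lucasV_one (P Q : ℤ) : lucasV P Q 1 = P := by
  simp [lucasV, lucasMatrix, trace_fin_two]

theorem lucasV_add_two (P Q : ℤ) (m : ℕ) :
    lucasV P Q (m + 2) = P * lucasV P Q (m + 1) - Q * lucasV P Q m := by
  simp only [lucasV, pow_add _ m 2, lucasMatrix_sq, mul_sub, mul_smul_comm, mul_one, ← pow_succ,
    trace_sub, trace_smul, smul_eq_mul]

theorem lucasU_mul (P Q : ℤ) (m j : ℕ) :
    lucasU P Q (m * j) = lucasU P Q m * lucasU (lucasV P Q m) (Q ^ m) j := by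
  cases j with
  | zero => simp [lucasU]
  | succ j =>
    have hsq : (lucasMatrix P Q ^ m) ^ 2 = lucasV P Q m • lucasMatrix P Q ^ m - Q ^ m • 1 := by
      rw [sq_eq_trace_smul_sub_det_smul, det_pow]
      simp [lucasV, lucasMatrix]
    rw [← lucasMatrix_pow_apply_one_zero, pow_mul, pow_succ_eq_lucasU hsq j, Matrix.sub_apply,
      Matrix.smul_apply, Matrix.smul_apply, one_apply_ne one_ne_zero,
      lucasMatrix_pow_apply_one_zero, smul_zero, sub_zero, smul_eq_mul, mul_comm]

theorem pow_dvd_lucasU_succ_sq {A B d : ℤ} (hA : d ∣ A ^ 2) (hB : d ∣ B) (n : ℕ) :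
    d ^ n ∣ lucasU A B (n + 1) ^ 2 :=
  pow_dvd_sq_of_recurrence (w := fun n ↦ lucasU A B (n + 1)) (fun _ ↦ rfl) hA hB
    (by simpa [lucasU] using hA) n

theorem pow_dvd_lucasV_sq {P Q d : ℤ} (hP : d ∣ P ^ 2) (hQ : d ∣ Q) (m : ℕ) :
    d ^ m ∣ lucasV P Q m ^ 2 :=
  pow_dvd_sq_of_recurrence (lucasV_add_two P Q) hP hQ (by rwa [lucasV_one]) m

theorem exists_lucasU_mul_succ_eq {P Q d : ℤ} (hP : d ∣ P ^ 2) (hQ : d ∣ Q) (m j : ℕ) :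
    ∃ t, lucasU P Q (m * (j + 1)) = t * lucasU P Q m ∧ d ^ (m * j) ∣ t ^ 2 := by
  refine ⟨lucasU (lucasV P Q m) (Q ^ m) (j + 1), by rw [lucasU_mul, mul_comm], ?_⟩
  rw [pow_mul]
  exact pow_dvd_lucasU_succ_sq (pow_dvd_lucasV_sq hP hQ m) (pow_dvd_pow_of_dvd hQ m) j

theorem exists_weight_of_not_exceptional {P Q : ℤ} (hP : P ≠ 0) {p : ℕ} (hp : p.Prime)
    (hpP : (p : ℤ) ∣ P) (hpQ : (p : ℤ) ∣ Q) {n : ℕ} (hn : 1 ≤ n)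
    (hexc : ¬ (p = 2 ∧ n = 1 ∧ 2 * padicValInt 2 P > padicValInt 2 Q)) :
    ∃ s, (p : ℤ) ^ s ∣ P ^ 2 ∧ (p : ℤ) ^ s ∣ Q ∧ 2 ≤ s * ((p - 1) * n) := by
  by_cases h : p = 2 ∧ n = 1
  · obtain ⟨rfl, rfl⟩ := h
    refine ⟨2, pow_dvd_pow_of_dvd hpP 2, ?_, le_rfl⟩
    have hvP : 1 ≤ padicValInt 2 P :=
      ((padicValInt_dvd_iff 1 P).1 (by simpa using hpP)).resolve_left hP
    exact (padicValInt_dvd_iff 2 Q).2 (Or.inr (by omega))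
  · refine ⟨1, by simpa using hpP.trans (dvd_pow_self P two_ne_zero), by simpa using hpQ, ?_⟩
    have := hp.two_le
    rw [one_mul]
    rcases not_and_or.1 h with hp2 | hn1
    · calc 2 = 2 * 1 := rfl
        _ ≤ (p - 1) * n := Nat.mul_le_mul (by omega) hn
    · calc 2 = 1 * 2 := rfl
        _ ≤ (p - 1) * n := Nat.mul_le_mul (by omega) (by omega)

theorem stmt_14_general (P Q : ℤ) (hP : P ≠ 0)
    (p : ℕ) (hp : p.Prime) (hpP : (p : ℤ) ∣ P) (hpQ : (p : ℤ) ∣ Q)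
    (n : ℕ) (hn : 1 ≤ n)
    (hexc : ¬ (p = 2 ∧ n = 1 ∧ 2 * padicValInt 2 P > padicValInt 2 Q))
    (k : ℕ) (hk : 1 ≤ k) :
    ∃ t : ℤ, lucasU P Q (p ^ k * n)
      = (p : ℤ) ^ (p ^ (k - 1)) * t * lucasU P Q (p ^ (k - 1) * n) := by
  obtain ⟨s, hsP, hsQ, hs⟩ := exists_weight_of_not_exceptional hP hp hpP hpQ hn hexc
  set m := p ^ (k - 1) * n
  obtain ⟨t, hU, ht⟩ := exists_lucasU_mul_succ_eq hsP hsQ m (p - 1)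
  have hidx : p ^ k * n = m * (p - 1 + 1) := by
    rw [Nat.sub_add_cancel hp.one_le, ← pow_sub_one_mul (by omega : k ≠ 0)]
    ring
  have hpt : (p : ℤ) ^ p ^ (k - 1) ∣ t := by
    rw [← pow_mul] at ht
    rw [← Int.pow_dvd_pow_iff two_ne_zero, ← pow_mul]
    refine (pow_dvd_pow _ ?_).trans ht
    calc p ^ (k - 1) * 2 ≤ p ^ (k - 1) * (s * ((p - 1) * n)) := Nat.mul_le_mul_left _ hs
      _ = s * (m * (p - 1)) := by ring
  obtain ⟨t', rfl⟩ := hpt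
  exact ⟨t', by rw [hidx, hU]⟩

theorem stmt_14 (P Q : ℤ) (hP : P ≠ 0) (hQ : Q ≠ 0) (hD : P ^ 2 - 4 * Q ≠ 0)
    (hnd : ∀ m : ℕ, 1 ≤ m → lucasU P Q m ≠ 0)
    (p : ℕ) (hp : p.Prime) (hpP : (p : ℤ) ∣ P) (hpQ : (p : ℤ) ∣ Q)
    (n : ℕ) (hn : 1 ≤ n) (hpn : Nat.gcd p n = 1)
    (hexc : ¬ (p = 2 ∧ n = 1 ∧ 2 * padicValInt 2 P > padicValInt 2 Q))
    (k : ℕ) (hk : 1 ≤ k) :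
    ∃ t : ℤ, lucasU P Q (p ^ k * n)
      = (p : ℤ) ^ (p ^ (k - 1)) * t * lucasU P Q (p ^ (k - 1) * n) :=
  stmt_14_general P Q hP p hp hpP hpQ n hn hexc k hk
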